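/- Let v, b₁, …, bₙ ∈ ℝ^{n+1} be linearly independent, let B = {b₁, …, bₙ}, and let p = ‖proj_{⟨B⟩}(v)‖. For each i set αᵢ = ⟨v, bᵢ⟩/‖v‖² and βᵢ = p·(‖bᵢ‖ − ⟨v, bᵢ⟩/‖v‖)/(‖v‖² − p·‖v‖). If x ∈ ℝⁿ satisfies dist(v, span{b₁ + x₁·v, …, bₙ + xₙ·v}) ≥ dist(v, ⟨B⟩), then for every i, −αᵢ − βᵢ ≤ xᵢ ≤ −αᵢ + βᵢ. -/

import Mathlib

open scoped RealInnerProductSpace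

/-- The orthogonal projection of `v` onto the span of `S`. -/
noncomputable def projSpan {m : ℕ} (S : Set (EuclideanSpace ℝ (Fin m)))
    (v : EuclideanSpace ℝ (Fin m)) : EuclideanSpace ℝ (Fin m) :=
  ((Submodule.span ℝ S).orthogonalProjectionOnto v : EuclideanSpace ℝ (Fin m))

/-- `dist(v, ⟨S⟩) = ‖v − proj_{⟨S⟩}(v)‖`. -/
noncomputable def distSpan {m : ℕ} (v : EuclideanSpace ℝ (Fin m))
    (S : Set (EuclideanSpace ℝ (Fin m))) : ℝ :=
  ‖v - projSpan S v‖

private lemma proj_min_aux {m : ℕ} (K : Submodule ℝ (EuclideanSpace ℝ (Fin m)))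
    (v u : EuclideanSpace ℝ (Fin m)) (hu : u ∈ K) :
    ‖v - (K.orthogonalProjectionOnto v : EuclideanSpace ℝ (Fin m))‖ ≤ ‖v - u‖ := by
  set P : EuclideanSpace ℝ (Fin m) := (K.orthogonalProjectionOnto v : EuclideanSpace ℝ (Fin m)) with hP
  have h0 : ⟪v - P, P - u⟫ = 0 :=
    K.starProjection_inner_eq_zero v (P - u) (Submodule.sub_mem K (K.orthogonalProjectionOnto v).2 hu)
  have h1 : ‖v - u‖ ^ 2 = ‖v - P‖ ^ 2 + ‖P - u‖ ^ 2 := by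
    have := norm_add_sq_eq_norm_sq_add_norm_sq_real h0
    have he : v - u = (v - P) + (P - u) := by abel
    rw [he]; simpa [pow_two] using this
  nlinarith [norm_nonneg (v - u), norm_nonneg (P - u), norm_nonneg (v - P)]

private lemma range_alg (V B p c y : ℝ) (hV : 0 < V) (hp0 : 0 ≤ p) (hpV : p < V) (hB : 0 ≤ B)
    (hc1 : c ≤ p * B)
    (h1 : (c + y*V^2)^2 ≤ p^2*(B^2 + 2*y*c + y^2*V^2)) :
    |y*V^2 + c| * (V - p) ≤ p*(B*V - c) := by
  have hVp : 0 < V - p := sub_pos.2 hpV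
  have hVp' : 0 < V + p := by linarith
  have h3 : 0 ≤ B*V - c := by nlinarith
  have hR : 0 ≤ p*(B*V - c) := mul_nonneg hp0 h3
  have hs : 0 ≤ |y*V^2 + c| := abs_nonneg _
  set s2 := (y*V^2 + c)^2 with hs2
  have h1' : s2 * V^2 ≤ p^2 * (s2 + (B^2*V^2 - c^2)) := by
    nlinarith [mul_le_mul_of_nonneg_right h1 (sq_nonneg V)]
  have h2 : s2 * ((V-p)*(V+p)) ≤ p^2*((B*V-c)*(B*V+c)) := by nlinarith
  have e1 : s2*((V-p)*(V+p))*(V-p) ≤ p^2*((B*V-c)*(B*V+c))*(V-p) :=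
    mul_le_mul_of_nonneg_right h2 (le_of_lt hVp)
  have h4 : 0 ≤ 2*B*V*p - 2*c*V := by nlinarith
  have e2 : p^2*((B*V-c)*(B*V+c))*(V-p) ≤ p^2*(B*V-c)^2*(V+p) := by
    nlinarith [mul_nonneg (mul_nonneg (sq_nonneg p) h3) h4]
  have e3 : s2*(V-p)^2 ≤ p^2*(B*V-c)^2 := by
    have h5 : s2*(V-p)^2*(V+p) ≤ p^2*(B*V-c)^2*(V+p) := by linarith [e1.trans e2]
    exact le_of_mul_le_mul_right h5 hVp'
  have hsq : (|y*V^2 + c| * (V - p))^2 ≤ (p*(B*V - c))^2 := by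
    have hq : (|y*V^2 + c| * (V - p))^2 = s2*(V-p)^2 := by rw [mul_pow, sq_abs]
    rw [hq, mul_pow]
    linarith [e3]
  exact (pow_le_pow_iff_left₀ (mul_nonneg hs (le_of_lt hVp)) hR (by norm_num)).1 hsq

set_option maxHeartbeats 1000000 in
/-- Range bound for the enumeration algorithm. With `p = ‖proj_{⟨B⟩}(v)‖`,
`αᵢ = ⟨v,bᵢ⟩/‖v‖²` and `βᵢ = p(‖bᵢ‖ − ⟨v,bᵢ⟩/‖v‖)/(‖v‖² − p‖v‖)`, any `x ∈ ℝⁿ` with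
`dist(v, span{bᵢ + xᵢ·v}) ≥ dist(v, ⟨B⟩)` satisfies `−αᵢ − βᵢ ≤ xᵢ ≤ −αᵢ + βᵢ` for all `i`. -/
theorem mdsp_range_bound (n : ℕ) (v : EuclideanSpace ℝ (Fin (n+1)))
    (b : Fin n → EuclideanSpace ℝ (Fin (n+1)))
    (hli : LinearIndependent ℝ (Fin.cons v b : Fin (n+1) → EuclideanSpace ℝ (Fin (n+1))))
    (p : ℝ) (hp : p = ‖projSpan (Set.range b) v‖)
    (α β : Fin n → ℝ)
    (hα : ∀ i, α i = ⟪v, b i⟫ / ‖v‖ ^ 2)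
    (hβ : ∀ i, β i = p * (‖b i‖ - ⟪v, b i⟫ / ‖v‖) / (‖v‖ ^ 2 - p * ‖v‖))
    (x : Fin n → ℝ)
    (hx : distSpan v (Set.range b) ≤ distSpan v (Set.range fun i => b i + x i • v)) :
    ∀ i, -α i - β i ≤ x i ∧ x i ≤ -α i + β i := by
  intro i
  obtain ⟨hb, hvnot⟩ := linearIndependent_fin_cons.mp hli
  have hv0 : v ≠ 0 := fun h => hvnot (h ▸ Submodule.zero_mem _)
  set V : ℝ := ‖v‖ with hV
  have hVpos : 0 < V := norm_pos_iff.2 hv0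
  set K : Submodule ℝ (EuclideanSpace ℝ (Fin (n+1))) := Submodule.span ℝ (Set.range b) with hK
  set P : EuclideanSpace ℝ (Fin (n+1)) := projSpan (Set.range b) v with hPdef
  have hPmem : P ∈ K := (K.orthogonalProjectionOnto v).2
  set d : ℝ := ‖v - P‖ with hd
  have hdpos : 0 < d := by
    rw [hd, norm_pos_iff, sub_ne_zero]
    intro h
    exact hvnot (h ▸ hPmem)
  -- Pythagoras: V^2 = p^2 + d^2
  have hperp : ⟪v - P, P⟫ = 0 :=
    K.starProjection_inner_eq_zero v P hPmem
  have hpyth : V^2 = p^2 + d^2 := by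
    have h0 : ⟪P, v - P⟫ = 0 := by rw [real_inner_comm]; exact hperp
    have := norm_add_sq_eq_norm_sq_add_norm_sq_real h0
    have he : P + (v - P) = v := by abel
    rw [he] at this
    rw [hp, hd]
    nlinarith [this]
  have hp0 : 0 ≤ p := hp ▸ norm_nonneg _
  have hpV : p < V := by nlinarith
  set c : ℝ := ⟪v, b i⟫ with hc
  set B : ℝ := ‖b i‖ with hB
  have hB0 : 0 ≤ B := norm_nonneg _
  have hbimem : b i ∈ K := Submodule.subset_span ⟨i, rfl⟩
  have hcP : c = ⟪P, b i⟫ := by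
    have h0 : ⟪v - P, b i⟫ = 0 := K.starProjection_inner_eq_zero v (b i) hbimem
    rw [inner_sub_left] at h0
    linarith [h0]
  have hc1 : c ≤ p * B := by
    rw [hcP, hp, hB]
    exact real_inner_le_norm P (b i)
  -- the new span
  set w : EuclideanSpace ℝ (Fin (n+1)) := b i + x i • v with hw
  have hwne : w ≠ 0 := by
    intro h
    rcases eq_or_ne (x i) 0 with h0 | h0
    · exact hb.ne_zero i (by simpa [hw, h0] using h)
    · apply hvnot
      have : v = (-(x i)⁻¹) • b i := by
        have : b i = -(x i • v) := by rwa [hw, add_eq_zero_iff_eq_neg] at h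
        rw [this, smul_neg, smul_smul]
        field_simp
        simp
      rw [this]
      exact Submodule.smul_mem _ _ hbimem
  have hw2pos : (0:ℝ) < ‖w‖^2 := pow_pos (norm_pos_iff.2 hwne) 2
  set K' : Submodule ℝ (EuclideanSpace ℝ (Fin (n+1))) :=
    Submodule.span ℝ (Set.range fun i => b i + x i • v) with hK'
  have hwmem : w ∈ K' := Submodule.subset_span ⟨i, rfl⟩
  set u : EuclideanSpace ℝ (Fin (n+1)) := (⟪v, w⟫ / ‖w‖^2) • w with hu
  have humem : u ∈ K' := Submodule.smul_mem _ _ hwmem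
  have hmin : distSpan v (Set.range fun i => b i + x i • v) ≤ ‖v - u‖ :=
    proj_min_aux K' v u humem
  have hdu : d ≤ ‖v - u‖ := le_trans hx hmin
  -- compute ‖v - u‖^2
  have hvu : ‖v - u‖^2 = V^2 - ⟪v, w⟫^2 / ‖w‖^2 := by
    have h1 : ‖v - u‖^2 = ‖v‖^2 - 2 * ⟪v, u⟫ + ‖u‖^2 := by
      rw [@norm_sub_sq_real]
    have h2 : ⟪v, u⟫ = (⟪v, w⟫ / ‖w‖^2) * ⟪v, w⟫ := by
      rw [hu, real_inner_smul_right]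
    have h3 : ‖u‖^2 = (⟪v, w⟫ / ‖w‖^2)^2 * ‖w‖^2 := by
      rw [hu, norm_smul, Real.norm_eq_abs, mul_pow, sq_abs]
    rw [h1, h2, h3, hV]
    field_simp
    ring
  have hkey : ⟪v, w⟫^2 ≤ p^2 * ‖w‖^2 := by
    have h1 : d^2 ≤ ‖v - u‖^2 := by nlinarith [norm_nonneg (v - u)]
    rw [hvu] at h1
    have h2 : ⟪v, w⟫^2 / ‖w‖^2 ≤ p^2 := by nlinarith
    calc ⟪v, w⟫^2 = (⟪v, w⟫^2 / ‖w‖^2) * ‖w‖^2 := by field_simp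
    _ ≤ p^2 * ‖w‖^2 := mul_le_mul_of_nonneg_right h2 (le_of_lt hw2pos)
  -- expand inner products
  have hinner : ⟪v, w⟫ = c + x i * V^2 := by
    rw [hw, inner_add_right, real_inner_smul_right, real_inner_self_eq_norm_sq]
  have hnormw : ‖w‖^2 = B^2 + 2 * (x i) * c + (x i)^2 * V^2 := by
    have h0 : ⟪b i, x i • v⟫ = x i * c := by
      rw [real_inner_smul_right, hc, real_inner_comm]
    have := norm_add_sq_eq_norm_sq_add_norm_sq_real (x := b i) (y := x i • v)
    rw [hw, @norm_add_sq_real, h0, norm_smul]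
    have : (|x i| * ‖v‖)^2 = (x i)^2 * V^2 := by rw [mul_pow, sq_abs, hV]
    simp only [Real.norm_eq_abs]
    rw [this]
    ring
  have h1 : (c + x i * V^2)^2 ≤ p^2 * (B^2 + 2 * (x i) * c + (x i)^2 * V^2) := by
    rw [← hinner, ← hnormw]; exact hkey
  have key : |x i * V^2 + c| * (V - p) ≤ p * (B * V - c) :=
    range_alg V B p c (x i) hVpos hp0 hpV hB0 hc1 h1
  -- translate to α, β bounds
  have hVVp : (0:ℝ) < V^2 * (V - p) := mul_pos (pow_pos hVpos 2) (sub_pos.2 hpV)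
  have hβ' : β i = p * (B * V - c) / (V^2 * (V - p)) := by
    rw [hβ i, ← hB, ← hc]
    rw [div_eq_div_iff (by nlinarith) (ne_of_gt hVVp)]
    field_simp
  have hαeq : x i + α i = (x i * V^2 + c) / V^2 := by
    rw [hα i, ← hc]
    field_simp
  have habs : |x i + α i| ≤ β i := by
    rw [hαeq, hβ', abs_div, abs_of_pos (by positivity : (0:ℝ) < V^2)]
    rw [div_le_div_iff₀ (by positivity) hVVp]
    nlinarith [mul_le_mul_of_nonneg_right key (sq_nonneg V)]
  rw [abs_le] at habs
  constructor <;> [linarith [habs.1]; linarith [habs.2]]
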